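/- Let {E_λ}_{λ∈Λ} be a net of normal completely positive maps from a von Neumann algebra M to a von Neumann algebra N which is CP-increasing (E_{λ₁} ⪯ E_{λ₂} when λ₁ ≤ λ₂) and CP-bounded (there is a normal CP map F with E_λ ⪯ F for all λ). Then there exists a unique normal completely positive map E : M → N such that E_λ(A) → E(A) in the weak* topology for all A ∈ M; moreover E is the least upper bound of the net with respect to the order ⪯. -/

import Mathlib

open scoped ComplexOrder InnerProductSpace
open Filter Topology ContinuousLinearMap

set_option synthInstance.maxHeartbeats 1000000
set_option maxHeartbeats 1000000

noncomputable section

namespace QSM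

noncomputable instance piLpComplete (ι : Type*) (E : Type*) [NormedAddCommGroup E]
    [CompleteSpace E] : CompleteSpace (PiLp 2 fun _ : ι => E) :=
  inferInstance

variable {H K : Type*}
  [NormedAddCommGroup H] [InnerProductSpace ℂ H] [CompleteSpace H]
  [NormedAddCommGroup K] [InnerProductSpace ℂ K] [CompleteSpace K]

/-- Sequential/net convergence in the weak operator topology. -/
def WOTto {E F : Type*} [NormedAddCommGroup E] [InnerProductSpace ℂ E]
    [NormedAddCommGroup F] [InnerProductSpace ℂ F]
    {ι : Type*} [Preorder ι] (T : ι → (E →L[ℂ] F)) (T' : E →L[ℂ] F) : Prop :=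
  ∀ x y, Tendsto (fun n => ⟪x, T n y⟫_ℂ) atTop (𝓝 ⟪x, T' y⟫_ℂ)

section MatOp

variable {ι : Type*} [Fintype ι] [DecidableEq ι]
variable {E F : Type*} [NormedAddCommGroup E] [InnerProductSpace ℂ E]
  [NormedAddCommGroup F] [InnerProductSpace ℂ F]

/-- The `j`-th coordinate projection on the Hilbert space direct sum. -/
def projCLM (E : Type*) [NormedAddCommGroup E] [InnerProductSpace ℂ E] (j : ι) :
    (PiLp 2 fun _ : ι => E) →L[ℂ] E :=
  (ContinuousLinearMap.proj j).comp (PiLp.continuousLinearEquiv 2 ℂ _).toContinuousLinearMap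

/-- The `i`-th coordinate inclusion into the Hilbert space direct sum. -/
def inclCLM (E : Type*) [NormedAddCommGroup E] [InnerProductSpace ℂ E] (i : ι) :
    E →L[ℂ] (PiLp 2 fun _ : ι => E) :=
  ((PiLp.continuousLinearEquiv 2 ℂ _).symm.toContinuousLinearMap).comp
    (ContinuousLinearMap.pi fun j => if j = i then ContinuousLinearMap.id ℂ E else 0)

/-- The operator on the `n`-fold Hilbert space direct sum determined by a matrix of operators.
This realizes the identification `Mₙ(B(E)) = B(Eⁿ)` used for amplifications. -/
def matOp (T : ι → ι → (E →L[ℂ] F)) : (PiLp 2 fun _ : ι => E) →L[ℂ] (PiLp 2 fun _ : ι => F) :=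
  ∑ i, ∑ j, (inclCLM F i).comp ((T i j).comp (projCLM E j))

end MatOp

variable (S : StarSubalgebra ℂ (H →L[ℂ] H))

/-- A linear map `Φ : S → B(K)` is completely positive if all of its amplifications
map positive matrices over `S` to positive operators. -/
def IsCPMap (Φ : S →ₗ[ℂ] (K →L[ℂ] K)) : Prop :=
  ∀ (n : ℕ) (a : Matrix (Fin n) (Fin n) S),
    (matOp fun i j => (a i j : H →L[ℂ] H)).IsPositive →
    (matOp fun i j => Φ (a i j)).IsPositive

/-- A linear map `Φ : S → B(K)` is completely bounded with complete bound `C` if all of its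
amplifications have norm at most `C` times the norm of the input matrix. -/
def IsCBMap (Φ : S →ₗ[ℂ] (K →L[ℂ] K)) (C : ℝ) : Prop :=
  ∀ (n : ℕ) (a : Matrix (Fin n) (Fin n) S),
    ‖matOp fun i j => Φ (a i j)‖ ≤ C * ‖matOp fun i j => (a i j : H →L[ℂ] H)‖

/-- Weak*-continuity (equivalently, for positive maps, normality) of a map `Φ : S → B(K)`:
`Φ` maps bounded weak-operator convergent sequences to weak-operator convergent sequences.
(On bounded sets of `B(H)`, `H` separable, the weak* topology coincides with the weak operator
topology and is metrizable, so sequences suffice.) -/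
def WStarCont (Φ : S →ₗ[ℂ] (K →L[ℂ] K)) : Prop :=
  ∀ (A : ℕ → S) (A' : S) (c : ℝ),
    (∀ n, ‖(A n : H →L[ℂ] H)‖ ≤ c) →
    WOTto (fun n => (A n : H →L[ℂ] H)) (A' : H →L[ℂ] H) →
    WOTto (fun n => Φ (A n)) (Φ A')

/-- A normal completely positive map. -/
def NormalCP (Φ : S →ₗ[ℂ] (K →L[ℂ] K)) : Prop :=
  IsCPMap S Φ ∧ WStarCont S Φ

/-- The cone ordering on maps: `Φ ⪯ Ψ` iff `Ψ - Φ` is a normal CP map. -/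
def CPle (Φ Ψ : S →ₗ[ℂ] (K →L[ℂ] K)) : Prop := NormalCP S (Ψ - Φ)

/-- A quantum channel into the von Neumann algebra `N`: a unital normal CP map with range in
`N`. -/
def IsChannel (N : VonNeumannAlgebra K) (Φ : S →ₗ[ℂ] (K →L[ℂ] K)) : Prop :=
  NormalCP S Φ ∧ (∀ X, Φ X ∈ N) ∧ Φ 1 = 1

/-- The elementary map `E ⊙ F : S → B(K)`, `A ↦ E A F`, for `E ∈ B(H,K)`, `F ∈ B(K,H)`. -/
def sandwichMap (L : H →L[ℂ] K) (R : K →L[ℂ] H) : S →ₗ[ℂ] (K →L[ℂ] K) where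
  toFun A := L ∘L ((A : H →L[ℂ] H) ∘L R)
  map_add' a b := by simp [add_comp, comp_add]
  map_smul' c a := by simp [smul_comp, comp_smulₛₗ]


/-- `B(H)` itself, regarded as a von Neumann algebra on `H`. -/
def topVN (H : Type*) [NormedAddCommGroup H] [InnerProductSpace ℂ H] [CompleteSpace H] :
    VonNeumannAlgebra H where
  toStarSubalgebra := ⊤
  centralizer_centralizer' := by
    show Set.centralizer (Set.centralizer ((⊤ : StarSubalgebra ℂ (H →L[ℂ] H)) : Set (H →L[ℂ] H)))
      = ((⊤ : StarSubalgebra ℂ (H →L[ℂ] H)) : Set (H →L[ℂ] H))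
    ext x
    simp only [Set.mem_centralizer_iff]
    constructor
    · intro _; simp
    · intro _ g hg
      exact (hg x (by simp)).symm

/-- The inclusion map `M ↪ B(H)` as a linear map. -/
def inclusionMap (M : VonNeumannAlgebra H) : M.toStarSubalgebra →ₗ[ℂ] (H →L[ℂ] H) where
  toFun A := (A : H →L[ℂ] H)
  map_add' _ _ := rfl
  map_smul' _ _ := rfl

theorem mem_topVN_sa {H : Type*} [NormedAddCommGroup H] [InnerProductSpace ℂ H]
    [CompleteSpace H] (a : H →L[ℂ] H) : a ∈ (topVN H).toStarSubalgebra := by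
  show a ∈ (⊤ : StarSubalgebra ℂ (H →L[ℂ] H))
  exact StarSubalgebra.mem_top

/-- The linear space of weak*-continuous completely bounded maps from `M` to `B(K)` with
values in `N`, realized (via the equality `CB = span CP` proved in the paper) as the linear
span of the normal completely positive maps from `M` into `N`. -/
def CBsp (M : VonNeumannAlgebra H) (N : VonNeumannAlgebra K) :
    Submodule ℂ (M.toStarSubalgebra →ₗ[ℂ] (K →L[ℂ] K)) :=
  Submodule.span ℂ {Φ | NormalCP M.toStarSubalgebra Φ ∧ ∀ X, Φ X ∈ N}

/-- `Eₙ ⇑ E` : the sequence `Eₙ` of normal CP maps is CP-increasing, CP-bounded by the normal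
CP map `E`, and converges pointwise to `E` in the weak operator topology (so that `E` is its
least upper bound). -/
def CPUp (E : ℕ → (S →ₗ[ℂ] (K →L[ℂ] K))) (E' : S →ₗ[ℂ] (K →L[ℂ] K)) : Prop :=
  (∀ n, NormalCP S (E n)) ∧ NormalCP S E' ∧
  (∀ n m, n ≤ m → CPle S (E n) (E m)) ∧ (∀ n, CPle S (E n) E') ∧
  ∀ X, WOTto (fun n => E n X) (E' X)

section Supermap

variable {H₁ K₁ H₂ K₂ : Type*}
  [NormedAddCommGroup H₁] [InnerProductSpace ℂ H₁] [CompleteSpace H₁]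
  [NormedAddCommGroup K₁] [InnerProductSpace ℂ K₁] [CompleteSpace K₁]
  [NormedAddCommGroup H₂] [InnerProductSpace ℂ H₂] [CompleteSpace H₂]
  [NormedAddCommGroup K₂] [InnerProductSpace ℂ K₂] [CompleteSpace K₂]
  {M₁ : VonNeumannAlgebra H₁} {N₁ : VonNeumannAlgebra K₁}
  {M₂ : VonNeumannAlgebra H₂} {N₂ : VonNeumannAlgebra K₂}

/-- Complete positivity of a supermap `Sm : CB(M₁,N₁) → CB(M₂,N₂)`: for every `n`, the
amplification `Iₙ ⊗ Sm` is positive.  Here a map `CB(M₁⁽ⁿ⁾,N₁⁽ⁿ⁾)` is encoded by its components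
`t k l i j ∈ CB(M₁,N₁)` under the identification `CB(M₁⁽ⁿ⁾,N₁⁽ⁿ⁾) = CB(Mₙ(ℂ),Mₙ(ℂ)) ⊗ CB(M₁,N₁)`,
and positivity of a map of matrix algebras means that it sends positive matrices (viewed as
operators on the direct sum via `matOp`) to positive matrices. -/
def SupCP (Sm : CBsp M₁ N₁ →ₗ[ℂ] CBsp M₂ N₂) : Prop :=
  ∀ (n : ℕ) (t : Fin n → Fin n → Fin n → Fin n → CBsp M₁ N₁),
    (∀ A : Matrix (Fin n) (Fin n) M₁.toStarSubalgebra,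
      (matOp fun i j => (A i j : H₁ →L[ℂ] H₁)).IsPositive →
      (matOp fun k l => ∑ i, ∑ j,
        ((t k l i j : M₁.toStarSubalgebra →ₗ[ℂ] (K₁ →L[ℂ] K₁)) (A i j))).IsPositive) →
    ∀ B : Matrix (Fin n) (Fin n) M₂.toStarSubalgebra,
      (matOp fun i j => (B i j : H₂ →L[ℂ] H₂)).IsPositive →
      (matOp fun k l => ∑ i, ∑ j,
        ((Sm (t k l i j) : M₂.toStarSubalgebra →ₗ[ℂ] (K₂ →L[ℂ] K₂)) (B i j))).IsPositive

/-- Normality of a supermap: `Sm` preserves least upper bounds of CP-increasing CP-bounded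
sequences. -/
def SupNormal (Sm : CBsp M₁ N₁ →ₗ[ℂ] CBsp M₂ N₂) : Prop :=
  ∀ (E : ℕ → CBsp M₁ N₁) (E' : CBsp M₁ N₁),
    CPUp M₁.toStarSubalgebra (fun n => (E n : M₁.toStarSubalgebra →ₗ[ℂ] (K₁ →L[ℂ] K₁)))
      (E' : M₁.toStarSubalgebra →ₗ[ℂ] (K₁ →L[ℂ] K₁)) →
    CPUp M₂.toStarSubalgebra (fun n => (Sm (E n) : M₂.toStarSubalgebra →ₗ[ℂ] (K₂ →L[ℂ] K₂)))
      (Sm E' : M₂.toStarSubalgebra →ₗ[ℂ] (K₂ →L[ℂ] K₂))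

/-- A quantum supermap: a linear, completely positive, normal map between spaces of
weak*-continuous completely bounded maps. -/
def IsSupermap (Sm : CBsp M₁ N₁ →ₗ[ℂ] CBsp M₂ N₂) : Prop :=
  SupCP Sm ∧ SupNormal Sm

/-- A deterministic quantum supermap: a quantum supermap mapping quantum channels to quantum
channels. -/
def IsDetSupermap (Sm : CBsp M₁ N₁ →ₗ[ℂ] CBsp M₂ N₂) : Prop :=
  IsSupermap Sm ∧
  ∀ E : CBsp M₁ N₁,
    IsChannel M₁.toStarSubalgebra N₁ (E : M₁.toStarSubalgebra →ₗ[ℂ] (K₁ →L[ℂ] K₁)) →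
    IsChannel M₂.toStarSubalgebra N₂ (Sm E : M₂.toStarSubalgebra →ₗ[ℂ] (K₂ →L[ℂ] K₂))

end Supermap

/-- The Loewner order on bounded operators. -/
def opLE {E : Type*} [NormedAddCommGroup E] [InnerProductSpace ℂ E] [CompleteSpace E]
    (a b : E →L[ℂ] E) : Prop := (b - a).IsPositive

/-- Least upper bounds for the Loewner order. -/
def opIsLUB {E : Type*} [NormedAddCommGroup E] [InnerProductSpace ℂ E] [CompleteSpace E]
    (s : Set (E →L[ℂ] E)) (a : E →L[ℂ] E) : Prop :=
  (∀ b ∈ s, opLE b a) ∧ ∀ c, (∀ b ∈ s, opLE b c) → opLE a c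

section Tensor

/-- A realization of the Hilbert space tensor product `H₁ ⊗ H₂` : a Hilbert space `G` together
with a bilinear map `t : H₁ × H₂ → G` with total range and satisfying the characteristic
inner product identity. -/
structure TensorStruct (H₁ H₂ G : Type*) [NormedAddCommGroup H₁] [InnerProductSpace ℂ H₁]
    [NormedAddCommGroup H₂] [InnerProductSpace ℂ H₂]
    [NormedAddCommGroup G] [InnerProductSpace ℂ G] : Type _ where
  t : H₁ →ₗ[ℂ] H₂ →ₗ[ℂ] G
  inner_t : ∀ x y v w, ⟪t x v, t y w⟫_ℂ = ⟪x, y⟫_ℂ * ⟪v, w⟫_ℂ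
  dense_t : Dense (↑(Submodule.span ℂ {g | ∃ x v, g = t x v}) : Set G)

variable {H₁ H₂ G : Type*}
  [NormedAddCommGroup H₁] [InnerProductSpace ℂ H₁] [CompleteSpace H₁]
  [NormedAddCommGroup H₂] [InnerProductSpace ℂ H₂] [CompleteSpace H₂]
  [NormedAddCommGroup G] [InnerProductSpace ℂ G] [CompleteSpace G]

/-- The set of elementary tensors `a ⊗ b`, `a ∈ M`, `b ∈ N`, inside `B(H₁ ⊗ H₂)`. -/
def elemT (τ : TensorStruct H₁ H₂ G) (M : VonNeumannAlgebra H₁) (N : VonNeumannAlgebra H₂) :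
    Set (G →L[ℂ] G) :=
  {c | ∃ a ∈ M, ∃ b ∈ N, ∀ x v, c (τ.t x v) = τ.t (a x) (b v)}

/-- The von Neumann algebra tensor product `M ⊗̄ N`, realized as the double commutant of the
set of elementary tensors. -/
def vnT (τ : TensorStruct H₁ H₂ G) (M : VonNeumannAlgebra H₁) (N : VonNeumannAlgebra H₂) :
    VonNeumannAlgebra G where
  toStarSubalgebra := StarSubalgebra.centralizer ℂ
    ((StarSubalgebra.centralizer ℂ (elemT τ M N) :
        StarSubalgebra ℂ (G →L[ℂ] G)) : Set (G →L[ℂ] G))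
  centralizer_centralizer' := by
    show Set.centralizer (Set.centralizer ((StarSubalgebra.centralizer ℂ
        ((StarSubalgebra.centralizer ℂ (elemT τ M N) :
          StarSubalgebra ℂ (G →L[ℂ] G)) : Set (G →L[ℂ] G))) : Set (G →L[ℂ] G)))
      = ((StarSubalgebra.centralizer ℂ
        ((StarSubalgebra.centralizer ℂ (elemT τ M N) :
          StarSubalgebra ℂ (G →L[ℂ] G)) : Set (G →L[ℂ] G))) : Set (G →L[ℂ] G))
    rw [StarSubalgebra.coe_centralizer_centralizer]
    exact Set.centralizer_centralizer_centralizer _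

end Tensor

section Amp

variable {H₁ K₁ H₂ K₂ V G G' : Type*}
  [NormedAddCommGroup H₁] [InnerProductSpace ℂ H₁] [CompleteSpace H₁]
  [NormedAddCommGroup K₁] [InnerProductSpace ℂ K₁] [CompleteSpace K₁]
  [NormedAddCommGroup H₂] [InnerProductSpace ℂ H₂] [CompleteSpace H₂]
  [NormedAddCommGroup K₂] [InnerProductSpace ℂ K₂] [CompleteSpace K₂]
  [NormedAddCommGroup V] [InnerProductSpace ℂ V] [CompleteSpace V]
  [NormedAddCommGroup G] [InnerProductSpace ℂ G] [CompleteSpace G]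
  [NormedAddCommGroup G'] [InnerProductSpace ℂ G'] [CompleteSpace G']

/-- `Ē` is the amplification `E ⊗ id_{B(V)} : M ⊗̄ B(V) → B(K₁ ⊗ V)` of the
weak*-continuous completely bounded map `E : M → B(K₁)` : it is weak*-continuous and acts in
the expected way on elementary tensors. -/
def IsAmp (M : VonNeumannAlgebra H₁) (τ : TensorStruct H₁ V G) (κ : TensorStruct K₁ V G')
    (E : M.toStarSubalgebra →ₗ[ℂ] (K₁ →L[ℂ] K₁))
    (Ebar : (vnT τ M (topVN V)).toStarSubalgebra →ₗ[ℂ] (G' →L[ℂ] G')) : Prop :=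
  WStarCont (vnT τ M (topVN V)).toStarSubalgebra Ebar ∧
  ∀ (c : (vnT τ M (topVN V)).toStarSubalgebra) (a : H₁ →L[ℂ] H₁) (ha : a ∈ M) (b : V →L[ℂ] V),
    (∀ x v, (c : G →L[ℂ] G) (τ.t x v) = τ.t (a x) (b v)) →
    ∀ x v, (Ebar c) (κ.t x v) = κ.t ((E ⟨a, ha⟩) x) (b v)

/-- The triple `(V, W, F)` (presented through concrete realizations `τ`, `κ` of the Hilbert
tensor products `H₁ ⊗ V` and `K₁ ⊗ V`) is a dilation of the supermap `Sm`, i.e.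
`[Sm(E)](A) = W* [(E ⊗ id_V)(F(A))] W` for all `E ∈ CB(M₁, B(K₁))` and `A ∈ M₂`. -/
def DilatesTo (M₁ : VonNeumannAlgebra H₁) (M₂ : VonNeumannAlgebra H₂)
    (τ : TensorStruct H₁ V G) (κ : TensorStruct K₁ V G') (W : K₂ →L[ℂ] G')
    (F : M₂.toStarSubalgebra →ₗ[ℂ] (G →L[ℂ] G)) (hF : ∀ X, F X ∈ vnT τ M₁ (topVN V))
    (Sm : CBsp M₁ (topVN K₁) →ₗ[ℂ] CBsp M₂ (topVN K₂)) : Prop :=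
  ∀ E : CBsp M₁ (topVN K₁),
    ∃ Ebar, IsAmp M₁ τ κ (E : M₁.toStarSubalgebra →ₗ[ℂ] (K₁ →L[ℂ] K₁)) Ebar ∧
      ∀ A, (Sm E : M₂.toStarSubalgebra →ₗ[ℂ] (K₂ →L[ℂ] K₂)) A
        = (ContinuousLinearMap.adjoint W) ∘L ((Ebar ⟨F A, hF A⟩) ∘L W)

/-- Minimality of a dilation: `V = span closure of {(u* ⊗ I_V) W v | u ∈ K₁, v ∈ K₂}`. -/
def MinimalDil (κ : TensorStruct K₁ V G') (W : K₂ →L[ℂ] G') : Prop :=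
  Dense (↑(Submodule.span ℂ {w : V | ∃ (u : K₁) (v : K₂) (ℓ : G' →L[ℂ] V),
    (∀ k z, ℓ (κ.t k z) = ⟪u, k⟫_ℂ • z) ∧ w = ℓ (W v)}) : Set V)

end Amp

/-- A bundled separable complex Hilbert space. -/
structure HilbertSpaceStruct : Type 1 where
  carrier : Type
  [grp : NormedAddCommGroup carrier]
  [ipc : InnerProductSpace ℂ carrier]
  [cpl : CompleteSpace carrier]
  [sep : TopologicalSpace.SeparableSpace carrier]

attribute [instance] HilbertSpaceStruct.grp HilbertSpaceStruct.ipc HilbertSpaceStruct.cpl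
  HilbertSpaceStruct.sep

/-!
For a CP map `Φ`, positivity of `Φ` applied to the `2 × 2` matrix `[[‖b‖, b], [b⋆, ‖b‖]]` gives
`|⟪x, Φ b y⟫| ≤ ‖b‖ / 2 * (⟪x, Φ 1 x⟫ + ⟪y, Φ 1 y⟫)`. Applied to the CP differences `E m - E l`,
this controls every matrix coefficient of `E l X` by the increasing nets `⟪x, E l 1 x⟫`, which are
bounded by `⟪x, F 1 x⟫`; so the coefficients are Cauchy and, the net `E l X` being norm bounded,
it has a weak-operator limit `E' X`. Complete positivity, the CP order and membership in the von
Neumann algebra `N` pass to weak-operator limits. Normality of `E'` holds because, by the same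
estimate applied to `E' - E l`, the maps `E l` converge to `E'` uniformly on bounded sets.
-/

section Operator

variable {E : Type*} [NormedAddCommGroup E] [InnerProductSpace ℂ E]

lemma isPositive_iff_inner_nonneg (T : E →L[ℂ] E) : T.IsPositive ↔ ∀ x, 0 ≤ ⟪x, T x⟫_ℂ := by
  simp only [isPositive_iff_complex, Complex.nonneg_iff, ← inner_conj_symm _ (T _),
    Complex.conj_re, Complex.conj_im, RCLike.re_to_complex, Complex.ext_iff, Complex.ofReal_re,
    Complex.ofReal_im]
  grind

lemma isPositive_of_tendsto {α : Type*} {l : Filter α} [l.NeBot] {T : α → E →L[ℂ] E}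
    {T' : E →L[ℂ] E} (hT : ∀ᶠ a in l, (T a).IsPositive)
    (hlim : ∀ x, Tendsto (fun a => ⟪x, T a x⟫_ℂ) l (𝓝 ⟪x, T' x⟫_ℂ)) : T'.IsPositive :=
  (isPositive_iff_inner_nonneg T').2 fun x =>
    ge_of_tendsto (hlim x) (hT.mono fun _ ha => ha.inner_nonneg_right x)

lemma re_inner_apply_self_le (T : E →L[ℂ] E) (x : E) : (⟪x, T x⟫_ℂ).re ≤ ‖T‖ * ‖x‖ ^ 2 :=
  calc (⟪x, T x⟫_ℂ).re ≤ ‖⟪x, T x⟫_ℂ‖ := Complex.re_le_norm _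
    _ ≤ ‖x‖ * (‖T‖ * ‖x‖) := (norm_inner_le_norm _ _).trans (by gcongr; exact T.le_opNorm x)
    _ = ‖T‖ * ‖x‖ ^ 2 := by ring

end Operator

section WOT

variable {E F : Type*} [NormedAddCommGroup E] [InnerProductSpace ℂ E]
  [NormedAddCommGroup F] [InnerProductSpace ℂ F] {ι : Type*} [Preorder ι]
  {T U : ι → E →L[ℂ] F} {T' U' : E →L[ℂ] F}

lemma wotTo_const (T' : E →L[ℂ] F) : WOTto (fun _ : ι => T') T' :=
  fun _ _ => tendsto_const_nhds

lemma WOTto.add (hT : WOTto T T') (hU : WOTto U U') : WOTto (fun i => T i + U i) (T' + U') :=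
  fun x y => by simpa only [add_apply, inner_add_right] using (hT x y).add (hU x y)

lemma WOTto.sub (hT : WOTto T T') (hU : WOTto U U') : WOTto (fun i => T i - U i) (T' - U') :=
  fun x y => by simpa only [sub_apply, inner_sub_right] using (hT x y).sub (hU x y)

lemma WOTto.const_smul (hT : WOTto T T') (c : ℂ) : WOTto (fun i => c • T i) (c • T') :=
  fun x y => by simpa only [smul_apply, inner_smul_right] using (hT x y).const_mul c

lemma WOTto.unique [Nonempty ι] [IsDirected ι (· ≤ ·)] {T'' : E →L[ℂ] F} (hT' : WOTto T T')
    (hT'' : WOTto T T'') : T' = T'' :=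
  ext fun y => ext_inner_left ℂ fun x => tendsto_nhds_unique (hT' x y) (hT'' x y)

lemma WOTto.mul_const {T : ι → E →L[ℂ] E} {T' : E →L[ℂ] E} (hT : WOTto T T') (g : E →L[ℂ] E) :
    WOTto (fun i => T i * g) (T' * g) :=
  fun x y => hT x (g y)

lemma WOTto.const_mul [CompleteSpace E] {T : ι → E →L[ℂ] E} {T' : E →L[ℂ] E} (hT : WOTto T T')
    (g : E →L[ℂ] E) : WOTto (fun i => g * T i) (g * T') :=
  fun x y => by
    have := hT (adjoint g x) y
    simp only [adjoint_inner_left] at this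
    exact this

lemma exists_linearMap_wotTo [Nonempty ι] [IsDirected ι (· ≤ ·)] {V : Type*} [AddCommGroup V]
    [Module ℂ V] (Φ : ι → V →ₗ[ℂ] (E →L[ℂ] F)) (h : ∀ v, ∃ T', WOTto (fun i => Φ i v) T') :
    ∃ Φ' : V →ₗ[ℂ] (E →L[ℂ] F), ∀ v, WOTto (fun i => Φ i v) (Φ' v) := by
  choose T' hT' using h
  refine ⟨⟨⟨T', fun v w => (hT' (v + w)).unique ?_⟩, fun c v => (hT' (c • v)).unique ?_⟩, hT'⟩
  · simpa only [map_add] using (hT' v).add (hT' w)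
  · simpa only [map_smul, RingHom.id_apply] using (hT' v).const_smul c

lemma exists_wotTo_of_cauchySeq [CompleteSpace E] [Nonempty ι] [IsDirected ι (· ≤ ·)]
    {T : ι → E →L[ℂ] E} {C : ℝ} (hT : ∀ i, ‖T i‖ ≤ C)
    (hcauchy : ∀ x y, CauchySeq fun i => ⟪x, T i y⟫_ℂ) : ∃ T', WOTto T T' := by
  choose L hL using fun x y => cauchySeq_tendsto_of_complete (hcauchy x y)
  have hL_eq : ∀ {x y z}, Tendsto (fun i => ⟪x, T i y⟫_ℂ) atTop (𝓝 z) → L x y = z :=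
    tendsto_nhds_unique (hL _ _)
  have hbound : ∀ x y, ‖L x y‖ ≤ C * ‖x‖ * ‖y‖ := fun x y =>
    le_of_tendsto (hL x y).norm (Eventually.of_forall fun i =>
      calc ‖⟪x, T i y⟫_ℂ‖ ≤ ‖x‖ * (C * ‖y‖) :=
            (norm_inner_le_norm _ _).trans (by gcongr; exact (T i).le_of_opNorm_le (hT i) y)
        _ = C * ‖x‖ * ‖y‖ := by ring)
  let B : E →L⋆[ℂ] E →L[ℂ] ℂ := LinearMap.mkContinuous₂ (LinearMap.mk₂'ₛₗ (starRingEnd ℂ)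
    (RingHom.id ℂ) L
    (fun x x' y => hL_eq (by simpa only [inner_add_left] using (hL x y).add (hL x' y)))
    (fun c x y => hL_eq (by
      simpa only [inner_smul_left, smul_eq_mul] using (hL x y).const_mul (starRingEnd ℂ c)))
    (fun x y y' => hL_eq (by simpa only [map_add, inner_add_right] using (hL x y).add (hL x y')))
    (fun c x y => hL_eq (by
      simpa only [map_smul, inner_smul_right, RingHom.id_apply, smul_eq_mul] using
        (hL x y).const_mul c)))
    C hbound
  refine ⟨adjoint (InnerProductSpace.continuousLinearMapOfBilin B), fun x y => ?_⟩
  rw [adjoint_inner_right, InnerProductSpace.continuousLinearMapOfBilin_apply]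
  exact hL x y

lemma mem_of_wotTo [CompleteSpace E] [Nonempty ι] [IsDirected ι (· ≤ ·)] {N : VonNeumannAlgebra E}
    {T : ι → E →L[ℂ] E} {T' : E →L[ℂ] E} (hT : ∀ i, T i ∈ N) (hT' : WOTto T T') : T' ∈ N := by
  rw [← SetLike.mem_coe, ← N.centralizer_centralizer, Set.mem_centralizer_iff]
  intro g hg
  have hcomm : (fun i => T i * g) = fun i => g * T i :=
    funext fun i => Set.mem_centralizer_iff.1 hg (T i) (hT i)
  exact (hT'.const_mul g).unique (hcomm ▸ hT'.mul_const g)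

end WOT

section BlockOperator

variable {ι : Type*} [DecidableEq ι] {E F : Type*} [NormedAddCommGroup E] [InnerProductSpace ℂ E]
  [NormedAddCommGroup F] [InnerProductSpace ℂ F]

lemma inclCLM_apply (i : ι) (w : F) (k : ι) :
    inclCLM F i w k = if k = i then w else 0 := by
  simp only [inclCLM]
  split_ifs <;> simp [*]

variable [Fintype ι]

lemma matOp_apply (T : ι → ι → (E →L[ℂ] F)) (x : PiLp 2 fun _ : ι => E) (i : ι) :
    matOp T x i = ∑ j, T i j (x j) := by
  simp only [matOp, sum_apply, comp_apply, WithLp.ofLp_sum, Finset.sum_apply, inclCLM_apply]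
  simp [projCLM]

lemma inner_matOp_apply (T : ι → ι → (E →L[ℂ] F)) (x : PiLp 2 fun _ : ι => E)
    (y : PiLp 2 fun _ : ι => F) :
    ⟪y, matOp T x⟫_ℂ = ∑ i, ∑ j, ⟪y i, T i j (x j)⟫_ℂ := by
  simp [PiLp.inner_apply, matOp_apply, inner_sum]

lemma isPositive_matOp_const_fin_one_iff (T : E →L[ℂ] E) :
    (matOp fun _ _ : Fin 1 => T).IsPositive ↔ T.IsPositive := by
  simp only [isPositive_iff_inner_nonneg, inner_matOp_apply, Fin.sum_univ_one]
  exact ⟨fun h x => h (WithLp.toLp 2 fun _ => x), fun h v => h (v 0)⟩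

lemma inner_apply_eq_of_isPositive_matOp_two {A B C D : E →L[ℂ] E}
    (h : (matOp ![![A, B], ![C, D]]).IsPositive)
    (x y : E) : ⟪C x, y⟫_ℂ = ⟪x, B y⟫_ℂ := by
  have := h.isSymmetric (WithLp.toLp 2 ![x, 0]) (WithLp.toLp 2 ![0, y])
  rw [← inner_conj_symm] at this
  simpa [inner_matOp_apply, Fin.sum_univ_two] using this

lemma two_mul_norm_inner_le_of_isPositive_matOp {A B C D : E →L[ℂ] E}
    (h : (matOp ![![A, B], ![C, D]]).IsPositive) (x y : E) :
    2 * ‖⟪x, B y⟫_ℂ‖ ≤ (⟪x, A x⟫_ℂ).re + (⟪y, D y⟫_ℂ).re := by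
  set α := ⟪x, B y⟫_ℂ
  set w : ℂ := -Complex.exp ((-α.arg : ℝ) * Complex.I) with hw_def
  have hw : ‖w‖ = 1 := by rw [norm_neg, Complex.norm_exp_ofReal_mul_I]
  have hwα : w * α = -‖α‖ := by
    conv_lhs => rw [← Complex.norm_mul_exp_arg_mul_I α]
    rw [hw_def, neg_mul, mul_left_comm, ← Complex.exp_add]
    simp
  have hC : ⟪w • y, C x⟫_ℂ = -‖α‖ := by
    rw [inner_smul_left, ← inner_conj_symm, inner_apply_eq_of_isPositive_matOp_two h, ← map_mul,
      hwα]
    simp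
  have hD : ⟪w • y, D (w • y)⟫_ℂ = ⟪y, D y⟫_ℂ := by
    rw [map_smul, inner_smul_left, inner_smul_right, ← mul_assoc, Complex.conj_mul', hw]
    simp
  have hP := h.inner_nonneg_right (WithLp.toLp 2 ![x, w • y])
  have hexp : ⟪WithLp.toLp 2 ![x, w • y], matOp ![![A, B], ![C, D]] (WithLp.toLp 2 ![x, w • y])⟫_ℂ
      = ⟪x, A x⟫_ℂ + ⟪x, B (w • y)⟫_ℂ + (⟪w • y, C x⟫_ℂ + ⟪w • y, D (w • y)⟫_ℂ) := by
    simp [inner_matOp_apply, Fin.sum_univ_two]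
  rw [hexp, hC, hD, map_smul, inner_smul_right, hwα] at hP
  have := (Complex.nonneg_iff.1 hP).1
  simp only [Complex.add_re, Complex.neg_re, Complex.ofReal_re] at this
  linarith

lemma isPositive_matOp_norm_smul_one [CompleteSpace E] (b : E →L[ℂ] E) :
    (matOp ![![(‖b‖ : ℂ) • 1, b], ![adjoint b, (‖b‖ : ℂ) • 1]]).IsPositive := by
  refine (isPositive_iff_inner_nonneg _).2 fun v => ?_
  set z := ⟪v 0, b (v 1)⟫_ℂ
  have hexp : ⟪v, matOp ![![(‖b‖ : ℂ) • 1, b], ![adjoint b, (‖b‖ : ℂ) • 1]] v⟫_ℂ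
      = ((‖b‖ * ‖v 0‖ ^ 2 + ‖b‖ * ‖v 1‖ ^ 2 + 2 * z.re : ℝ) : ℂ) := by
    simp [inner_matOp_apply, Fin.sum_univ_two, adjoint_inner_right, inner_self_eq_norm_sq_to_K]
    rw [← inner_conj_symm (b (v 1))]
    linear_combination (norm := (push_cast; ring)) Complex.add_conj z
  have hz : |z.re| ≤ ‖b‖ * ‖v 0‖ * ‖v 1‖ :=
    calc |z.re| ≤ ‖z‖ := Complex.abs_re_le_norm z
      _ ≤ ‖v 0‖ * (‖b‖ * ‖v 1‖) := (norm_inner_le_norm _ _).trans (by gcongr; exact b.le_opNorm _)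
      _ = ‖b‖ * ‖v 0‖ * ‖v 1‖ := by ring
  rw [hexp, Complex.zero_le_real]
  nlinarith [abs_le.1 hz, mul_nonneg (norm_nonneg b) (sq_nonneg (‖v 0‖ - ‖v 1‖))]

end BlockOperator

section CP

variable {H K : Type*} [NormedAddCommGroup H] [InnerProductSpace ℂ H] [CompleteSpace H]
  [NormedAddCommGroup K] [InnerProductSpace ℂ K] {S : StarSubalgebra ℂ (H →L[ℂ] H)}
  {Φ : S →ₗ[ℂ] (K →L[ℂ] K)}

lemma IsCPMap.isPositive_apply (hΦ : IsCPMap S Φ) {b : S} (hb : (b : H →L[ℂ] H).IsPositive) :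
    (Φ b).IsPositive :=
  (isPositive_matOp_const_fin_one_iff _).1
    (hΦ 1 (fun _ _ => b) ((isPositive_matOp_const_fin_one_iff _).2 hb))

lemma IsCPMap.isPositive_apply_one (hΦ : IsCPMap S Φ) : (Φ 1).IsPositive :=
  hΦ.isPositive_apply isPositive_one

lemma IsCPMap.norm_inner_apply_le (hΦ : IsCPMap S Φ) (b : S) (x y : K) :
    ‖⟪x, Φ b y⟫_ℂ‖ ≤ ‖(b : H →L[ℂ] H)‖ / 2 * ((⟪x, Φ 1 x⟫_ℂ).re + (⟪y, Φ 1 y⟫_ℂ).re) := by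
  let c : ℂ := (‖(b : H →L[ℂ] H)‖ : ℂ)
  let a : Matrix (Fin 2) (Fin 2) S := !![c • 1, b; star b, c • 1]
  have ha : (matOp fun i j => (a i j : H →L[ℂ] H))
      = matOp ![![c • 1, (b : H →L[ℂ] H)], ![adjoint (b : H →L[ℂ] H), c • 1]] := by
    congr 1; funext i j; fin_cases i <;> fin_cases j <;> rfl
  have hΦa : (matOp fun i j => Φ (a i j)) = matOp ![![c • Φ 1, Φ b], ![Φ (star b), c • Φ 1]] := by
    congr 1; funext i j; fin_cases i <;> fin_cases j
    · exact map_smul Φ c 1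
    · rfl
    · rfl
    · exact map_smul Φ c 1
  have hpos : (matOp fun i j => (a i j : H →L[ℂ] H)).IsPositive := by
    rw [ha]; exact isPositive_matOp_norm_smul_one _
  have h := hΦ 2 a hpos
  rw [hΦa] at h
  have := two_mul_norm_inner_le_of_isPositive_matOp h x y
  simp only [c, smul_apply, inner_smul_right, Complex.re_ofReal_mul] at this
  linarith

lemma IsCPMap.norm_apply_le (hΦ : IsCPMap S Φ) (b : S) :
    ‖Φ b‖ ≤ ‖(b : H →L[ℂ] H)‖ * ‖Φ 1‖ := by
  refine opNorm_le_of_re_inner_le (by positivity) fun x y hx hy => ?_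
  have hself : ∀ z : K, ‖z‖ = 1 → (⟪z, Φ 1 z⟫_ℂ).re ≤ ‖Φ 1‖ := fun z hz => by
    simpa [hz] using re_inner_apply_self_le (Φ 1) z
  calc RCLike.re ⟪Φ b x, y⟫_ℂ ≤ ‖⟪y, Φ b x⟫_ℂ‖ :=
        (RCLike.re_le_norm _).trans_eq (norm_inner_symm _ _)
    _ ≤ ‖(b : H →L[ℂ] H)‖ / 2 * ((⟪y, Φ 1 y⟫_ℂ).re + (⟪x, Φ 1 x⟫_ℂ).re) :=
      hΦ.norm_inner_apply_le b y x
    _ ≤ ‖(b : H →L[ℂ] H)‖ / 2 * (‖Φ 1‖ + ‖Φ 1‖) := by gcongr <;> exact hself _ ‹_›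
    _ = ‖(b : H →L[ℂ] H)‖ * ‖Φ 1‖ := by ring

lemma WStarCont.sub {Ψ : S →ₗ[ℂ] (K →L[ℂ] K)} (hΦ : WStarCont S Φ) (hΨ : WStarCont S Ψ) :
    WStarCont S (Φ - Ψ) :=
  fun A A' c hA hAA' => (hΦ A A' c hA hAA').sub (hΨ A A' c hA hAA')

end CP

lemma cauchySeq_of_dist_le_sub {Λ α : Type*} [Preorder Λ] [Nonempty Λ] [IsDirected Λ (· ≤ ·)]
    [PseudoMetricSpace α] {u : Λ → α} {h : Λ → ℝ} {r : ℝ} (hh : Tendsto h atTop (𝓝 r))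
    (hu : ∀ l m, l ≤ m → dist (u l) (u m) ≤ h m - h l) : CauchySeq u := by
  refine Metric.cauchy_iff.2 ⟨map_neBot, fun ε hε => ?_⟩
  obtain ⟨l₀, hl₀⟩ := eventually_atTop.1 (Metric.tendsto_nhds.1 hh (ε / 4) (by positivity))
  refine ⟨u '' Set.Ici l₀, image_mem_map (Ici_mem_atTop l₀), ?_⟩
  rintro _ ⟨m, hm, rfl⟩ _ ⟨m', hm', rfl⟩
  obtain ⟨p, hmp, hm'p⟩ := exists_ge_ge m m'
  have hr : ∀ q, l₀ ≤ q → |h q - r| < ε / 4 := hl₀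
  calc dist (u m) (u m') ≤ dist (u m) (u p) + dist (u m') (u p) := dist_triangle_right _ _ _
    _ ≤ (h p - h m) + (h p - h m') := add_le_add (hu _ _ hmp) (hu _ _ hm'p)
    _ < ε := by
      have := abs_lt.1 (hr p (hm.trans hmp))
      have := abs_lt.1 (hr m hm)
      have := abs_lt.1 (hr m' hm')
      linarith

section CPLimit

variable {H K : Type*} [NormedAddCommGroup H] [InnerProductSpace ℂ H] [CompleteSpace H]
  [NormedAddCommGroup K] [InnerProductSpace ℂ K] {S : StarSubalgebra ℂ (H →L[ℂ] H)}
  {Λ : Type*} [Preorder Λ] [Nonempty Λ] [IsDirected Λ (· ≤ ·)]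
  {Φ : Λ → S →ₗ[ℂ] (K →L[ℂ] K)} {Φ' : S →ₗ[ℂ] (K →L[ℂ] K)}

lemma isCPMap_of_wotTo (hΦ : ∀ᶠ l in atTop, IsCPMap S (Φ l))
    (hlim : ∀ X, WOTto (fun l => Φ l X) (Φ' X)) : IsCPMap S Φ' := fun n a ha =>
  isPositive_of_tendsto (hΦ.mono fun _ hl => hl n a ha) fun v => by
    simp only [inner_matOp_apply]
    exact tendsto_finsetSum _ fun i _ => tendsto_finsetSum _ fun j _ => hlim _ _ _

lemma cauchySeq_inner_apply_of_isCPMap_sub {Ψ : S →ₗ[ℂ] (K →L[ℂ] K)}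
    (hmono : ∀ l m, l ≤ m → IsCPMap S (Φ m - Φ l)) (hbdd : ∀ l, IsCPMap S (Ψ - Φ l))
    (X : S) (x y : K) : CauchySeq fun l => ⟪x, Φ l X y⟫_ℂ := by
  have hre_sub : ∀ (Φ₁ Φ₂ : S →ₗ[ℂ] (K →L[ℂ] K)) (z : K),
      (⟪z, (Φ₁ - Φ₂) 1 z⟫_ℂ).re = (⟪z, Φ₁ 1 z⟫_ℂ).re - (⟪z, Φ₂ 1 z⟫_ℂ).re := fun _ _ _ => by
    simp only [LinearMap.sub_apply, sub_apply, inner_sub_right, Complex.sub_re]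
  have hconv : ∀ z : K, ∃ r, Tendsto (fun l => (⟪z, Φ l 1 z⟫_ℂ).re) atTop (𝓝 r) := fun z => by
    refine ⟨_, tendsto_atTop_ciSup (fun l m hlm => ?_) ⟨(⟪z, Ψ 1 z⟫_ℂ).re, ?_⟩⟩
    · have := (hmono l m hlm).isPositive_apply_one.re_inner_nonneg_right z
      simp only [RCLike.re_to_complex, hre_sub] at this
      linarith
    · rintro _ ⟨l, rfl⟩
      have := (hbdd l).isPositive_apply_one.re_inner_nonneg_right z
      simp only [RCLike.re_to_complex, hre_sub] at this
      linarith
  obtain ⟨rx, hrx⟩ := hconv x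
  obtain ⟨ry, hry⟩ := hconv y
  refine cauchySeq_of_dist_le_sub ((hrx.add hry).const_mul (‖(X : H →L[ℂ] H)‖ / 2))
    fun l m hlm => ?_
  have := (hmono l m hlm).norm_inner_apply_le X x y
  rw [hre_sub, hre_sub] at this
  rw [dist_comm, dist_eq_norm, ← inner_sub_right]
  exact this.trans_eq (by ring)

lemma wStarCont_of_wotTo (hΦ : ∀ l, WStarCont S (Φ l)) (hdiff : ∀ l, IsCPMap S (Φ' - Φ l))
    (hlim : ∀ X, WOTto (fun l => Φ l X) (Φ' X)) : WStarCont S Φ' := by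
  intro A A' c hA hAA' x y
  set η : Λ → ℝ := fun l => (⟪x, (Φ' - Φ l) 1 x⟫_ℂ).re + (⟪y, (Φ' - Φ l) 1 y⟫_ℂ).re
  have hη : Tendsto (fun l => c / 2 * η l) atTop (𝓝 0) := by
    have hz : ∀ z, Tendsto (fun l => (⟪z, (Φ' - Φ l) 1 z⟫_ℂ).re) atTop (𝓝 0) := fun z => by
      have := (tendsto_const_nhds (x := ⟪z, Φ' 1 z⟫_ℂ)).sub (hlim 1 z z)
      rw [sub_self] at this
      simp only [LinearMap.sub_apply, sub_apply, inner_sub_right]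
      simpa only [Function.comp_def, Complex.zero_re] using
        (Complex.continuous_re.tendsto 0).comp this
    simpa only [add_zero, mul_zero] using ((hz x).add (hz y)).const_mul (c / 2)
  have hη_nonneg : ∀ l, 0 ≤ η l := fun l => add_nonneg
    ((hdiff l).isPositive_apply_one.re_inner_nonneg_right x)
    ((hdiff l).isPositive_apply_one.re_inner_nonneg_right y)
  have hunif : TendstoUniformly (fun l n => ⟪x, Φ l (A n) y⟫_ℂ) (fun n => ⟪x, Φ' (A n) y⟫_ℂ)
      atTop := by
    refine Metric.tendstoUniformly_iff.2 fun ε hε =>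
      (hη.eventually (gt_mem_nhds hε)).mono fun l hl n => ?_
    rw [dist_eq_norm, ← inner_sub_right]
    calc ‖⟪x, Φ' (A n) y - Φ l (A n) y⟫_ℂ‖ ≤ ‖(A n : H →L[ℂ] H)‖ / 2 * η l :=
          (hdiff l).norm_inner_apply_le (A n) x y
      _ ≤ c / 2 * η l := by gcongr; exacts [hη_nonneg l, hA n]
      _ < ε := hl
  exact hunif.tendsto_of_eventually_tendsto
    (Eventually.of_forall fun l => hΦ l A A' c hA hAA' x y) (hlim A' x y)

end CPLimit

theorem statement4_general {H K : Type*} [NormedAddCommGroup H] [InnerProductSpace ℂ H] [CompleteSpace H] [NormedAddCommGroup K] [InnerProductSpace ℂ K] [CompleteSpace K]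
    (M : VonNeumannAlgebra H) (N : VonNeumannAlgebra K)
    {Λ : Type*} [Preorder Λ] [Nonempty Λ] [IsDirected Λ (· ≤ ·)]
    (E : Λ → (M.toStarSubalgebra →ₗ[ℂ] (K →L[ℂ] K)))
    (hcp : ∀ l, NormalCP M.toStarSubalgebra (E l))
    (hrange : ∀ l X, E l X ∈ N)
    (hmono : ∀ l₁ l₂, l₁ ≤ l₂ → CPle M.toStarSubalgebra (E l₁) (E l₂))
    (hbdd : ∃ F, NormalCP M.toStarSubalgebra F ∧ (∀ X, F X ∈ N) ∧
      ∀ l, CPle M.toStarSubalgebra (E l) F) :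
    ∃! E' : M.toStarSubalgebra →ₗ[ℂ] (K →L[ℂ] K),
      NormalCP M.toStarSubalgebra E' ∧ (∀ X, E' X ∈ N) ∧
      (∀ X, WOTto (fun l => E l X) (E' X)) ∧
      (∀ l, CPle M.toStarSubalgebra (E l) E') ∧
      ∀ F, NormalCP M.toStarSubalgebra F → (∀ l, CPle M.toStarSubalgebra (E l) F) →
        CPle M.toStarSubalgebra E' F := by
  obtain ⟨F, -, -, hEF⟩ := hbdd
  have hnorm : ∀ l X, ‖E l X‖ ≤ ‖(X : H →L[ℂ] H)‖ * ‖F 1‖ := fun l X =>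
    ((hcp l).1.norm_apply_le X).trans <| by
      gcongr
      exact CStarAlgebra.norm_le_norm_of_nonneg_of_le
        ((nonneg_iff_isPositive _).2 (hcp l).1.isPositive_apply_one)
        (hEF l).1.isPositive_apply_one
  obtain ⟨E', hlim⟩ := exists_linearMap_wotTo E fun X => exists_wotTo_of_cauchySeq (hnorm · X)
    (cauchySeq_inner_apply_of_isCPMap_sub (fun l m hlm => (hmono l m hlm).1) (fun l => (hEF l).1)
      X)
  have hle : ∀ l, IsCPMap _ (E' - E l) := fun l =>
    isCPMap_of_wotTo ((eventually_ge_atTop l).mono fun m hm => (hmono l m hm).1)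
      fun X => (hlim X).sub (wotTo_const _)
  have hE' : NormalCP _ E' := ⟨isCPMap_of_wotTo (.of_forall fun l => (hcp l).1) hlim,
    wStarCont_of_wotTo (fun l => (hcp l).2) hle hlim⟩
  refine ⟨E', ⟨hE', fun X => mem_of_wotTo (hrange · X) (hlim X), hlim,
    fun l => ⟨hle l, hE'.2.sub (hcp l).2⟩, fun G hG hEG => ⟨?_, hG.2.sub hE'.2⟩⟩,
    fun E'' hE'' => LinearMap.ext fun X => (hE''.2.2.1 X).unique (hlim X)⟩
  exact isCPMap_of_wotTo (.of_forall fun l => (hEG l).1) fun X => (wotTo_const _).sub (hlim X)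

/-- A CP-increasing CP-bounded net of normal CP maps from `M` to `N` has a
unique pointwise weak* limit, which is a normal CP map `M → N` and is the least upper bound
of the net for the CP order. -/
theorem statement4 {H K : Type*} [NormedAddCommGroup H] [InnerProductSpace ℂ H] [CompleteSpace H] [TopologicalSpace.SeparableSpace H] [NormedAddCommGroup K] [InnerProductSpace ℂ K] [CompleteSpace K] [TopologicalSpace.SeparableSpace K]
    (M : VonNeumannAlgebra H) (N : VonNeumannAlgebra K)
    {Λ : Type*} [Preorder Λ] [Nonempty Λ] [IsDirected Λ (· ≤ ·)]
    (E : Λ → (M.toStarSubalgebra →ₗ[ℂ] (K →L[ℂ] K)))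
    (hcp : ∀ l, NormalCP M.toStarSubalgebra (E l))
    (hrange : ∀ l X, E l X ∈ N)
    (hmono : ∀ l₁ l₂, l₁ ≤ l₂ → CPle M.toStarSubalgebra (E l₁) (E l₂))
    (hbdd : ∃ F, NormalCP M.toStarSubalgebra F ∧ (∀ X, F X ∈ N) ∧
      ∀ l, CPle M.toStarSubalgebra (E l) F) :
    ∃! E' : M.toStarSubalgebra →ₗ[ℂ] (K →L[ℂ] K),
      NormalCP M.toStarSubalgebra E' ∧ (∀ X, E' X ∈ N) ∧
      (∀ X, WOTto (fun l => E l X) (E' X)) ∧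
      (∀ l, CPle M.toStarSubalgebra (E l) E') ∧
      ∀ F, NormalCP M.toStarSubalgebra F → (∀ l, CPle M.toStarSubalgebra (E l) F) →
        CPle M.toStarSubalgebra E' F :=
  statement4_general M N E hcp hrange hmono hbdd

end QSM
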